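/- Let 0 < β, λ ≤ 1 with λ + β > 1, and let 0 ≤ a < b. Let g : [a,b] → ℝ be β-Hölder continuous and f : [a,b] → ℝ be λ-Hölder continuous. Then there is a constant C depending only on β and λ such that the Young integral satisfies |∫_a^b f dg| ≤ C ‖g‖_{a,b,β} ( ‖f‖_{a,b} (b−a)^β + ‖f‖_{a,b,λ} (b−a)^{λ+β} ); in particular, the indefinite Young integral t ↦ ∫_a^t f dg satisfies ‖∫_a^· f dg‖_{a,b,β} ≤ C ‖g‖_{a,b,β} ( ‖f‖_{a,b} + ‖f‖_{a,b,λ}(b−a)^λ ). -/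

import Mathlib

/-!
The Riemann sums of the Young integral are sums of the germ `Ξ s t = (g t - g s) • f s` over a
partition, and the defect `Ξ p q - Ξ p z - Ξ z q = -(g q - g z) • (f z - f p)` is bounded by
`‖f‖_λ ‖g‖_β (q - p) ^ θ` with `θ = λ + β > 1`. Young's point-removal argument: a partition of
`[u, v]` into `n + 1` intervals has an interior point whose two neighbours are within
`2 (v - u) / n` of each other, and removing it changes the sum by a single defect. Removing points
one by one shows that every Riemann sum of `[u, v]` is within `2 ^ θ ζ(θ) K (v - u) ^ θ` of
`Ξ u v`. Applied on each interval of a partition of mesh `δ`, this bounds the change of the sum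
under refinement by `2 ^ θ ζ(θ) K δ ^ (θ - 1) (v - u)`, so via common refinements the sums are
Cauchy as the mesh tends to `0`. The limit `I` satisfies `‖I - Ξ u v‖ ≤ 2 ^ θ ζ(θ) K (v - u) ^ θ`,
and together with the additivity of the integral over adjacent intervals this gives both bounds.
-/

open Set MeasureTheory Filter

noncomputable def supNorm {B : Type*} [NormedAddCommGroup B] (x : ℝ → B) (a b : ℝ) : ℝ :=
  ⨆ t : Icc a b, ‖x t‖

noncomputable def holderNorm {B : Type*} [NormedAddCommGroup B] (x : ℝ → B) (a b β : ℝ) : ℝ :=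
  ⨆ q : {q : ℝ × ℝ // a ≤ q.1 ∧ q.1 < q.2 ∧ q.2 ≤ b},
    ‖x q.1.2 - x q.1.1‖ / (q.1.2 - q.1.1) ^ β

def HolderOn {B : Type*} [NormedAddCommGroup B] (f : ℝ → B) (a b lam : ℝ) : Prop :=
  ∃ C : ℝ, ∀ s ∈ Icc a b, ∀ t ∈ Icc a b, ‖f t - f s‖ ≤ C * |t - s| ^ lam

def IsYoungIntegral {B : Type*} [NormedAddCommGroup B] [NormedSpace ℝ B]
    (f : ℝ → B) (g : ℝ → ℝ) (a b : ℝ) (I : B) : Prop :=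
  ∀ ε > 0, ∃ δ > 0, ∀ (n : ℕ) (t : ℕ → ℝ),
    t 0 = a → t n = b → (∀ i < n, t i < t (i + 1)) → (∀ i < n, t (i + 1) - t i < δ) →
    ‖(∑ i ∈ Finset.range n, (g (t (i + 1)) - g (t i)) • f (t i)) - I‖ < ε

open Classical in
noncomputable def youngIntegral {B : Type*} [NormedAddCommGroup B] [NormedSpace ℝ B]
    (f : ℝ → B) (g : ℝ → ℝ) (a b : ℝ) : B :=
  if h : ∃ I, IsYoungIntegral f g a b I then h.choose else 0

open Finset Topology

theorem Finset.sum_range_eq_sum_sum_Ico {M : Type*} [AddCommMonoid M] (f : ℕ → M) {φ : ℕ → ℕ}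
    (h0 : φ 0 = 0) {n : ℕ} (hφ : ∀ i < n, φ i ≤ φ (i + 1)) :
    ∑ k ∈ range (φ n), f k = ∑ i ∈ range n, ∑ k ∈ Ico (φ i) (φ (i + 1)), f k := by
  induction n with
  | zero => simp [h0]
  | succ n ih =>
    rw [sum_range_succ, ← ih fun i hi => hφ i (by omega), sum_range_add_sum_Ico _ (hφ n (by omega))]

theorem Real.rpow_le_rpow_sub_one_mul {x δ θ : ℝ} (hx : 0 ≤ x) (hxδ : x ≤ δ) (hθ : 1 ≤ θ) :
    x ^ θ ≤ δ ^ (θ - 1) * x := by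
  calc x ^ θ = x ^ (θ - 1) * x := by rw [← Real.rpow_add_one' hx (by linarith), sub_add_cancel]
    _ ≤ δ ^ (θ - 1) * x := by gcongr

structure IsPartition (t : ℕ → ℝ) (n : ℕ) (u v : ℝ) : Prop where
  zero : t 0 = u
  last : t n = v
  lt_succ : ∀ i < n, t i < t (i + 1)

namespace IsPartition

variable {t : ℕ → ℝ} {n : ℕ} {u v : ℝ}

theorem strictMonoOn (ht : IsPartition t n u v) : StrictMonoOn t (Set.Iic n) :=
  strictMonoOn_Iic_of_lt_succ fun i hi => ht.lt_succ i hi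

theorem le {i j : ℕ} (ht : IsPartition t n u v) (hij : i ≤ j) (hj : j ≤ n) : t i ≤ t j :=
  ht.strictMonoOn.monotoneOn (hij.trans hj) hj hij

theorem mem_Icc {i : ℕ} (ht : IsPartition t n u v) (hi : i ≤ n) : t i ∈ Set.Icc u v :=
  ⟨ht.zero ▸ ht.le (Nat.zero_le i) hi, ht.last ▸ ht.le hi le_rfl⟩

theorem left_le_right (ht : IsPartition t n u v) : u ≤ v :=
  (ht.mem_Icc le_rfl).1.trans (ht.mem_Icc le_rfl).2

theorem slice {j k : ℕ} (ht : IsPartition t n u v) (hjk : j ≤ k) (hk : k ≤ n) :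
    IsPartition (fun i => t (j + i)) (k - j) (t j) (t k) where
  zero := rfl
  last := by rw [Nat.add_sub_cancel' hjk]
  lt_succ i hi := ht.lt_succ (j + i) (by omega)

theorem exists_gap_two_le (ht : IsPartition t (n + 2) u v) :
    ∃ j < n + 1, t (j + 2) - t j ≤ 2 * (v - u) / (n + 1) := by
  have hsum : ∑ j ∈ range (n + 1), (t (j + 2) - t j) ≤
      ∑ _j ∈ range (n + 1), 2 * (v - u) / (n + 1) := by
    have hsplit (j : ℕ) : t (j + 2) - t j = (t (j + 1 + 1) - t (j + 1)) + (t (j + 1) - t j) := by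
      ring
    have h₁ : u ≤ t 1 := ht.zero ▸ ht.le (Nat.zero_le 1) (by omega)
    have h₂ : t (n + 1) ≤ v := ht.last ▸ ht.le (Nat.le_succ _) le_rfl
    simp only [hsplit, sum_add_distrib, sum_range_sub (fun j => t (j + 1)), sum_range_sub t,
      sum_const, card_range, nsmul_eq_mul]
    rw [show n + 1 + 1 = n + 2 from rfl, ht.last, ht.zero, zero_add]
    push_cast
    field_simp
    linarith
  simpa using exists_le_of_sum_le nonempty_range_add_one hsum

end IsPartition

theorem exists_isPartition_mesh_lt {u v δ : ℝ} (huv : u ≤ v) (hδ : 0 < δ) :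
    ∃ n t, IsPartition t n u v ∧ ∀ i < n, t (i + 1) - t i < δ := by
  rcases huv.eq_or_lt with rfl | huv
  · exact ⟨0, fun _ => u, ⟨rfl, rfl, by simp⟩, by simp⟩
  obtain ⟨n, hn⟩ := exists_nat_gt ((v - u) / δ)
  have hn0 : (0 : ℝ) < n := (div_pos (sub_pos.2 huv) hδ).trans hn
  have hstep : 0 < (v - u) / n := div_pos (sub_pos.2 huv) hn0
  have hstep_lt : (v - u) / n < δ := by
    rw [div_lt_iff₀ hδ] at hn
    rw [div_lt_iff₀ hn0]
    linarith
  refine ⟨n, fun i => u + i * ((v - u) / n), ⟨by simp, by field_simp; ring, fun i _ => ?_⟩,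
    fun i _ => ?_⟩ <;> push_cast <;> linarith

theorem exists_isPartition_superset {s : Set ℝ} (hs : s.Finite) {u v : ℝ} (hsuv : s ⊆ Set.Icc u v)
    (hu : u ∈ s) (hv : v ∈ s) : ∃ N r, IsPartition r N u v ∧ s ⊆ r '' Set.Iic N := by
  set S := hs.toFinset
  have hS : S.Nonempty := ⟨u, hs.mem_toFinset.2 hu⟩
  set N := S.card - 1
  have hcard : S.card = N + 1 := by have := hS.card_pos; omega
  set e := S.orderEmbOfFin hcard
  have hmin : S.min' hS = u :=
    le_antisymm (S.min'_le u (hs.mem_toFinset.2 hu)) (hsuv (hs.mem_toFinset.1 (S.min'_mem hS))).1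
  have hmax : S.max' hS = v :=
    le_antisymm (hsuv (hs.mem_toFinset.1 (S.max'_mem hS))).2 (S.le_max' v (hs.mem_toFinset.2 hv))
  refine ⟨N, fun i => e ⟨min i N, by omega⟩, ⟨?_, ?_, fun i hi => ?_⟩, fun x hx => ?_⟩
  · simpa [hmin] using S.orderEmbOfFin_zero hcard (Nat.succ_pos N)
  · simpa [hmax] using S.orderEmbOfFin_last hcard (Nat.succ_pos N)
  · exact e.strictMono (Fin.mk_lt_mk.2 (by omega))
  · obtain ⟨⟨i, hi⟩, rfl⟩ : x ∈ Set.range e := by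
      rw [S.range_orderEmbOfFin hcard]; exact hs.mem_toFinset.2 hx
    exact ⟨i, Nat.lt_succ_iff.1 hi, by simp [Nat.min_eq_left (Nat.lt_succ_iff.1 hi)]⟩

theorem IsPartition.exists_index_of_subset {t r : ℕ → ℝ} {n N : ℕ} {u v : ℝ}
    (ht : IsPartition t n u v) (hr : IsPartition r N u v) (href : t '' Set.Iic n ⊆ r '' Set.Iic N) :
    ∃ φ : ℕ → ℕ, φ 0 = 0 ∧ φ n = N ∧ (∀ i < n, φ i < φ (i + 1)) ∧
      ∀ i ≤ n, φ i ≤ N ∧ r (φ i) = t i := by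
  have hφ : ∀ i, ∃ j, i ≤ n → j ≤ N ∧ r j = t i := fun i => by
    by_cases hi : i ≤ n
    · obtain ⟨j, hj, e⟩ := href ⟨i, hi, rfl⟩
      exact ⟨j, fun _ => ⟨hj, e⟩⟩
    · exact ⟨0, fun h => absurd h hi⟩
  choose φ hφ using hφ
  have hφ_eq {i j : ℕ} (hi : i ≤ n) (hj : j ≤ N) (h : r j = t i) : φ i = j :=
    hr.strictMonoOn.injOn (hφ i hi).1 hj ((hφ i hi).2.trans h.symm)
  refine ⟨φ, hφ_eq (Nat.zero_le n) (Nat.zero_le N) (hr.zero.trans ht.zero.symm),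
    hφ_eq le_rfl le_rfl (hr.last.trans ht.last.symm), fun i hi => ?_, hφ⟩
  refine (hr.strictMonoOn.lt_iff_lt (hφ i hi.le).1 (hφ (i + 1) hi).1).1 ?_
  rw [(hφ i hi.le).2, (hφ (i + 1) hi).2]
  exact ht.lt_succ i hi

/-- The partition `t` with the point `t (j + 1)` removed. -/
def skipPoint (t : ℕ → ℝ) (j : ℕ) : ℕ → ℝ := fun i => if i ≤ j then t i else t (i + 1)

theorem IsPartition.skipPoint {t : ℕ → ℝ} {n j : ℕ} {u v : ℝ} (ht : IsPartition t (n + 1) u v)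
    (hj : j < n) : IsPartition (skipPoint t j) n u v where
  zero := by simp [_root_.skipPoint, ht.zero]
  last := by simp [_root_.skipPoint, show ¬ n ≤ j by omega, ht.last]
  lt_succ i hi := by
    simp only [_root_.skipPoint]
    split_ifs
    · exact ht.lt_succ i (by omega)
    · exact (ht.strictMonoOn.lt_iff_lt (Set.mem_Iic.2 (by omega)) (Set.mem_Iic.2 (by omega))).2
        (by omega)
    · omega
    · exact ht.lt_succ (i + 1) (by omega)

/-- The points `t₁ 0, …, t₁ n₁` followed by `t₂ 1, t₂ 2, …`. -/
def appendPoints (t₁ : ℕ → ℝ) (n₁ : ℕ) (t₂ : ℕ → ℝ) : ℕ → ℝ :=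
  fun i => if i ≤ n₁ then t₁ i else t₂ (i - n₁)

section Append

variable {t₁ t₂ : ℕ → ℝ} {n₁ n₂ : ℕ} {u w v : ℝ}

theorem appendPoints_of_le {i : ℕ} (hi : i ≤ n₁) : appendPoints t₁ n₁ t₂ i = t₁ i := if_pos hi

theorem appendPoints_add (h : t₁ n₁ = t₂ 0) (j : ℕ) : appendPoints t₁ n₁ t₂ (n₁ + j) = t₂ j := by
  rcases Nat.eq_zero_or_pos j with rfl | hj
  · simpa [appendPoints] using h
  · simp [appendPoints, show ¬ n₁ + j ≤ n₁ by omega]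

theorem appendPoints_gap (h : t₁ n₁ = t₂ 0) (i : ℕ) :
    (i < n₁ ∧ appendPoints t₁ n₁ t₂ (i + 1) - appendPoints t₁ n₁ t₂ i = t₁ (i + 1) - t₁ i) ∨
      ∃ j, i = n₁ + j ∧ appendPoints t₁ n₁ t₂ (i + 1) - appendPoints t₁ n₁ t₂ i =
        t₂ (j + 1) - t₂ j := by
  rcases lt_or_ge i n₁ with hi | hi
  · exact Or.inl ⟨hi, by rw [appendPoints_of_le hi, appendPoints_of_le hi.le]⟩
  · obtain ⟨j, rfl⟩ := Nat.exists_eq_add_of_le hi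
    exact Or.inr ⟨j, rfl, by rw [add_assoc, appendPoints_add h, appendPoints_add h]⟩

theorem IsPartition.append (ht₁ : IsPartition t₁ n₁ u w) (ht₂ : IsPartition t₂ n₂ w v) :
    IsPartition (appendPoints t₁ n₁ t₂) (n₁ + n₂) u v where
  zero := by rw [appendPoints_of_le (Nat.zero_le _), ht₁.zero]
  last := by rw [appendPoints_add (ht₁.last.trans ht₂.zero.symm), ht₂.last]
  lt_succ i hi := by
    rcases appendPoints_gap (ht₁.last.trans ht₂.zero.symm) i with ⟨h, hgap⟩ | ⟨j, rfl, hgap⟩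
    · linarith [ht₁.lt_succ i h]
    · linarith [ht₂.lt_succ j (by omega)]

theorem appendPoints_mesh_lt (ht₁ : IsPartition t₁ n₁ u w) (ht₂ : IsPartition t₂ n₂ w v) {δ : ℝ}
    (hmesh₁ : ∀ i < n₁, t₁ (i + 1) - t₁ i < δ) (hmesh₂ : ∀ i < n₂, t₂ (i + 1) - t₂ i < δ) :
    ∀ i < n₁ + n₂, appendPoints t₁ n₁ t₂ (i + 1) - appendPoints t₁ n₁ t₂ i < δ := fun i hi => by
  rcases appendPoints_gap (ht₁.last.trans ht₂.zero.symm) i with ⟨h, hgap⟩ | ⟨j, rfl, hgap⟩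
  · exact hgap ▸ hmesh₁ i h
  · exact hgap ▸ hmesh₂ j (by omega)

end Append

section Sewing

variable {E : Type*} [NormedAddCommGroup E]

def sewingSum (Ξ : ℝ → ℝ → E) (t : ℕ → ℝ) (n : ℕ) : E :=
  ∑ i ∈ range n, Ξ (t i) (t (i + 1))

def SewingBound (Ξ : ℝ → ℝ → E) (K θ u v : ℝ) : Prop :=
  ∀ p z q, u ≤ p → p ≤ z → z ≤ q → q ≤ v → ‖Ξ p q - Ξ p z - Ξ z q‖ ≤ K * (q - p) ^ θ

def HasSewingLimit (Ξ : ℝ → ℝ → E) (u v : ℝ) (I : E) : Prop :=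
  ∀ ε > 0, ∃ δ > 0, ∀ n t, IsPartition t n u v → (∀ i < n, t (i + 1) - t i < δ) →
    ‖sewingSum Ξ t n - I‖ < ε

noncomputable def sewingConst (θ : ℝ) : ℝ := 2 ^ θ * ∑' k : ℕ, 1 / ((k : ℝ) + 1) ^ θ

variable {Ξ : ℝ → ℝ → E} {K θ u v : ℝ}

theorem SewingBound.mono {u' v' : ℝ} (h : SewingBound Ξ K θ u v) (hu : u ≤ u') (hv : v' ≤ v) :
    SewingBound Ξ K θ u' v' :=
  fun p z q hp hpz hzq hq => h p z q (hu.trans hp) hpz hzq (hq.trans hv)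

theorem SewingBound.apply_self_eq_zero (h : SewingBound Ξ K θ u v) (hθ : θ ≠ 0) {p : ℝ}
    (hp : p ∈ Set.Icc u v) : Ξ p p = 0 := by
  simpa [Real.zero_rpow hθ] using h p p p hp.1 le_rfl le_rfl hp.2

theorem sewingSum_appendPoints {t₁ t₂ : ℕ → ℝ} {n₁ n₂ : ℕ} (h : t₁ n₁ = t₂ 0) :
    sewingSum Ξ (appendPoints t₁ n₁ t₂) (n₁ + n₂) = sewingSum Ξ t₁ n₁ + sewingSum Ξ t₂ n₂ := by
  rw [sewingSum, sum_range_add]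
  congr 1 <;> refine sum_congr rfl fun i hi => ?_
  · rw [appendPoints_of_le (mem_range.1 hi).le, appendPoints_of_le (mem_range.1 hi)]
  · rw [add_assoc, appendPoints_add h, appendPoints_add h]

theorem sewingSum_eq_sewingSum_skipPoint_add (t : ℕ → ℝ) {n j : ℕ} (hj : j < n) :
    sewingSum Ξ t (n + 1) = sewingSum Ξ (skipPoint t j) n +
      (Ξ (t j) (t (j + 1)) + Ξ (t (j + 1)) (t (j + 2)) - Ξ (t j) (t (j + 2))) := by
  obtain ⟨r, rfl⟩ : ∃ r, n = j + 1 + r := ⟨n - (j + 1), by omega⟩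
  have hhead : ∀ i ∈ range j, Ξ (skipPoint t j i) (skipPoint t j (i + 1)) = Ξ (t i) (t (i + 1)) :=
    fun i hi => by simp [skipPoint, (mem_range.1 hi).le, Nat.succ_le_of_lt (mem_range.1 hi)]
  have htail : ∀ i ∈ range r, Ξ (skipPoint t j (j + 1 + i)) (skipPoint t j (j + 1 + i + 1)) =
      Ξ (t (j + 2 + i)) (t (j + 2 + i + 1)) := fun i _ => by
    simp only [skipPoint, show ¬ j + 1 + i ≤ j by omega, show ¬ j + 1 + i + 1 ≤ j by omega,
      if_false]
    ring_nf
  simp only [sewingSum, show j + 1 + r + 1 = j + 2 + r by ring, sum_range_add, sum_range_succ,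
    sum_congr rfl hhead, sum_congr rfl htail]
  simp only [skipPoint, le_refl, ↓reduceIte, add_le_iff_nonpos_right, nonpos_iff_eq_zero,
    one_ne_zero]
  abel

theorem norm_sewingSum_sub_le_sum (hK : 0 ≤ K) (hθ : 0 ≤ θ) (hΞ : SewingBound Ξ K θ u v) :
    ∀ {n : ℕ} {t : ℕ → ℝ}, IsPartition t (n + 1) u v →
      ‖sewingSum Ξ t (n + 1) - Ξ u v‖ ≤ K * ∑ k ∈ range n, (2 * (v - u) / (k + 1)) ^ θ := by
  intro n
  induction n with
  | zero =>
    intro t ht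
    simp [sewingSum, ← ht.zero, ← ht.last]
  | succ n ih =>
    intro t ht
    obtain ⟨j, hj, hgap⟩ := ht.exists_gap_two_le
    have hdefect : ‖Ξ (t j) (t (j + 1)) + Ξ (t (j + 1)) (t (j + 2)) - Ξ (t j) (t (j + 2))‖ ≤
        K * (2 * (v - u) / (n + 1)) ^ θ := by
      rw [← norm_neg, show ∀ a b c : E, -(a + b - c) = c - a - b from fun a b c => by abel]
      refine (hΞ _ _ _ (ht.mem_Icc (by omega)).1 (ht.le (by omega) (by omega))
        (ht.le (by omega) (by omega)) (ht.mem_Icc (by omega)).2).trans ?_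
      gcongr
      exact sub_nonneg.2 (ht.le (by omega) (by omega))
    rw [sewingSum_eq_sewingSum_skipPoint_add t hj, add_sub_right_comm, sum_range_succ, mul_add]
    refine (norm_add_le _ _).trans (add_le_add (ih (ht.skipPoint hj)) ?_)
    exact_mod_cast hdefect

theorem sewingConst_nonneg (θ : ℝ) : 0 ≤ sewingConst θ :=
  mul_nonneg (by positivity) (tsum_nonneg fun _ => by positivity)

theorem sum_rpow_two_mul_div_le (hθ : 1 < θ) {D : ℝ} (hD : 0 ≤ D) (n : ℕ) :
    ∑ k ∈ range n, (2 * D / (k + 1)) ^ θ ≤ sewingConst θ * D ^ θ := by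
  have hsummable : Summable fun k : ℕ => 1 / ((k : ℝ) + 1) ^ θ := by
    simpa using (summable_nat_add_iff 1).2 (Real.summable_one_div_nat_rpow.2 hθ)
  calc ∑ k ∈ range n, (2 * D / (k + 1)) ^ θ
      = (2 * D) ^ θ * ∑ k ∈ range n, 1 / ((k : ℝ) + 1) ^ θ := by
        rw [mul_sum]
        refine sum_congr rfl fun k _ => ?_
        rw [Real.div_rpow (by positivity) (by positivity)]
        ring
    _ ≤ (2 * D) ^ θ * ∑' k : ℕ, 1 / ((k : ℝ) + 1) ^ θ := by
        gcongr
        exact hsummable.sum_le_tsum _ fun k _ => by positivity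
    _ = sewingConst θ * D ^ θ := by
        rw [sewingConst, Real.mul_rpow zero_le_two hD]
        ring

theorem norm_sewingSum_sub_le (hθ : 1 < θ) (hK : 0 ≤ K) (hΞ : SewingBound Ξ K θ u v)
    {n : ℕ} {t : ℕ → ℝ} (ht : IsPartition t n u v) :
    ‖sewingSum Ξ t n - Ξ u v‖ ≤ sewingConst θ * K * (v - u) ^ θ := by
  cases n with
  | zero =>
    obtain rfl : u = v := ht.zero.symm.trans ht.last
    simp [sewingSum, hΞ.apply_self_eq_zero (by linarith) ⟨le_rfl, le_rfl⟩,
      Real.zero_rpow (by linarith : θ ≠ 0)]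
  | succ n =>
    calc ‖sewingSum Ξ t (n + 1) - Ξ u v‖
        ≤ K * ∑ k ∈ range n, (2 * (v - u) / (k + 1)) ^ θ :=
          norm_sewingSum_sub_le_sum hK (by linarith) hΞ ht
      _ ≤ K * (sewingConst θ * (v - u) ^ θ) :=
          mul_le_mul_of_nonneg_left
            (sum_rpow_two_mul_div_le hθ (sub_nonneg.2 ht.left_le_right) n) hK
      _ = sewingConst θ * K * (v - u) ^ θ := by ring

theorem norm_sewingSum_sub_of_refines (hθ : 1 < θ) (hK : 0 ≤ K) (hΞ : SewingBound Ξ K θ u v)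
    {n N : ℕ} {t r : ℕ → ℝ} (ht : IsPartition t n u v) (hr : IsPartition r N u v)
    (href : t '' Set.Iic n ⊆ r '' Set.Iic N) {δ : ℝ} (hmesh : ∀ i < n, t (i + 1) - t i ≤ δ) :
    ‖sewingSum Ξ r N - sewingSum Ξ t n‖ ≤ sewingConst θ * K * δ ^ (θ - 1) * (v - u) := by
  obtain ⟨φ, hφ0, hφn, hφlt, hφ⟩ := ht.exists_index_of_subset hr href
  have hblock : ∀ i < n, ‖∑ k ∈ Ico (φ i) (φ (i + 1)), Ξ (r k) (r (k + 1)) - Ξ (t i) (t (i + 1))‖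
      ≤ sewingConst θ * K * δ ^ (θ - 1) * (t (i + 1) - t i) := fun i hi => by
    have hslice := hr.slice (hφlt i hi).le (hφ (i + 1) hi).1
    rw [(hφ i hi.le).2, (hφ (i + 1) hi).2] at hslice
    have hsub : SewingBound Ξ K θ (t i) (t (i + 1)) :=
      hΞ.mono (ht.mem_Icc hi.le).1 (ht.mem_Icc hi).2
    calc _ = ‖sewingSum Ξ (fun k => r (φ i + k)) (φ (i + 1) - φ i) - Ξ (t i) (t (i + 1))‖ := by
          rw [sum_Ico_eq_sum_range]; rfl
      _ ≤ sewingConst θ * K * (t (i + 1) - t i) ^ θ := norm_sewingSum_sub_le hθ hK hsub hslice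
      _ ≤ sewingConst θ * K * (δ ^ (θ - 1) * (t (i + 1) - t i)) := by
          have := sewingConst_nonneg θ
          gcongr
          exact Real.rpow_le_rpow_sub_one_mul (sub_nonneg.2 (ht.lt_succ i hi).le) (hmesh i hi) hθ.le
      _ = _ := by ring
  calc ‖sewingSum Ξ r N - sewingSum Ξ t n‖
      = ‖∑ i ∈ range n,
          (∑ k ∈ Ico (φ i) (φ (i + 1)), Ξ (r k) (r (k + 1)) - Ξ (t i) (t (i + 1)))‖ := by
        rw [sum_sub_distrib, sewingSum, sewingSum, ← hφn,
          sum_range_eq_sum_sum_Ico _ hφ0 fun i hi => (hφlt i hi).le]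
    _ ≤ ∑ i ∈ range n, sewingConst θ * K * δ ^ (θ - 1) * (t (i + 1) - t i) :=
        (norm_sum_le _ _).trans (sum_le_sum fun i hi => hblock i (mem_range.1 hi))
    _ = sewingConst θ * K * δ ^ (θ - 1) * (v - u) := by
        rw [← mul_sum, sum_range_sub, ht.zero, ht.last]

theorem norm_sewingSum_sub_sewingSum_le (hθ : 1 < θ) (hK : 0 ≤ K) (hΞ : SewingBound Ξ K θ u v)
    {n₁ n₂ : ℕ} {t₁ t₂ : ℕ → ℝ} (ht₁ : IsPartition t₁ n₁ u v) (ht₂ : IsPartition t₂ n₂ u v)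
    {δ : ℝ} (hmesh₁ : ∀ i < n₁, t₁ (i + 1) - t₁ i ≤ δ) (hmesh₂ : ∀ i < n₂, t₂ (i + 1) - t₂ i ≤ δ) :
    ‖sewingSum Ξ t₁ n₁ - sewingSum Ξ t₂ n₂‖ ≤ 2 * (sewingConst θ * K * δ ^ (θ - 1) * (v - u)) := by
  have hfin : (t₁ '' Set.Iic n₁ ∪ t₂ '' Set.Iic n₂).Finite :=
    ((Set.finite_Iic n₁).image t₁).union ((Set.finite_Iic n₂).image t₂)
  have hsub : t₁ '' Set.Iic n₁ ∪ t₂ '' Set.Iic n₂ ⊆ Set.Icc u v := by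
    rintro _ (⟨i, hi, rfl⟩ | ⟨i, hi, rfl⟩)
    exacts [ht₁.mem_Icc hi, ht₂.mem_Icc hi]
  obtain ⟨N, r, hr, href⟩ := exists_isPartition_superset hfin hsub
    (Or.inl ⟨0, Nat.zero_le n₁, ht₁.zero⟩) (Or.inl ⟨n₁, Set.mem_Iic.2 le_rfl, ht₁.last⟩)
  have h₁ := norm_sewingSum_sub_of_refines hθ hK hΞ ht₁ hr (subset_union_left.trans href) hmesh₁
  have h₂ := norm_sewingSum_sub_of_refines hθ hK hΞ ht₂ hr (subset_union_right.trans href) hmesh₂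
  calc ‖sewingSum Ξ t₁ n₁ - sewingSum Ξ t₂ n₂‖
      ≤ ‖sewingSum Ξ r N - sewingSum Ξ t₁ n₁‖ + ‖sewingSum Ξ r N - sewingSum Ξ t₂ n₂‖ :=
        norm_sub_le_norm_sub_add_norm_sub .. |>.trans_eq (by rw [norm_sub_rev])
    _ ≤ _ := by linarith

theorem HasSewingLimit.norm_sub_le {I : E} (hθ : 1 < θ) (hK : 0 ≤ K) (hΞ : SewingBound Ξ K θ u v)
    (huv : u ≤ v) (hI : HasSewingLimit Ξ u v I) :
    ‖I - Ξ u v‖ ≤ sewingConst θ * K * (v - u) ^ θ := by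
  refine le_of_forall_pos_lt_add fun ε hε => ?_
  obtain ⟨δ, hδ, hconv⟩ := hI ε hε
  obtain ⟨n, t, ht, hmesh⟩ := exists_isPartition_mesh_lt huv hδ
  calc ‖I - Ξ u v‖ ≤ ‖sewingSum Ξ t n - Ξ u v‖ + ‖sewingSum Ξ t n - I‖ := by
        rw [add_comm, norm_sub_rev _ I]; exact norm_sub_le_norm_sub_add_norm_sub ..
    _ < sewingConst θ * K * (v - u) ^ θ + ε :=
        add_lt_add_of_le_of_lt (norm_sewingSum_sub_le hθ hK hΞ ht) (hconv n t ht hmesh)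

theorem exists_hasSewingLimit [CompleteSpace E] (hθ : 1 < θ) (hK : 0 ≤ K)
    (hΞ : SewingBound Ξ K θ u v) (huv : u ≤ v) : ∃ I, HasSewingLimit Ξ u v I := by
  set ω : ℝ → ℝ := fun δ => 2 * (sewingConst θ * K * δ ^ (θ - 1) * (v - u))
  have hω : Tendsto ω (𝓝 0) (𝓝 0) := by
    have := (Real.continuousAt_rpow_const 0 (θ - 1) (Or.inr (by linarith))).tendsto
    rw [Real.zero_rpow (by linarith)] at this
    simpa [ω] using ((this.const_mul (sewingConst θ * K)).mul_const (v - u)).const_mul 2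
  choose n P hP hmesh using fun m : ℕ =>
    exists_isPartition_mesh_lt huv (Nat.one_div_pos_of_nat (n := m))
  have hclose {δ : ℝ} {m : ℕ} (hm : 1 / ((m : ℝ) + 1) ≤ δ) {n' : ℕ} {t' : ℕ → ℝ}
      (ht' : IsPartition t' n' u v) (hmesh' : ∀ i < n', t' (i + 1) - t' i ≤ δ) :
      ‖sewingSum Ξ t' n' - sewingSum Ξ (P m) (n m)‖ ≤ ω δ :=
    norm_sewingSum_sub_sewingSum_le hθ hK hΞ ht' (hP m) hmesh' fun i hi =>
      (hmesh m i hi).le.trans hm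
  have hcauchy : CauchySeq fun m => sewingSum Ξ (P m) (n m) :=
    cauchySeq_of_le_tendsto_0 (fun N => ω (1 / ((N : ℝ) + 1)))
      (fun m k N hm hk => by
        rw [dist_eq_norm]
        exact hclose (Nat.one_div_le_one_div hk) (hP m) fun i hi =>
          (hmesh m i hi).le.trans (Nat.one_div_le_one_div hm))
      (hω.comp tendsto_one_div_add_atTop_nhds_zero_nat)
  obtain ⟨I, hI⟩ := cauchySeq_tendsto_of_complete hcauchy
  refine ⟨I, fun ε hε => ?_⟩
  obtain ⟨δ, hωδ, hδ⟩ := (((hω.mono_left nhdsWithin_le_nhds).eventually (gt_mem_nhds hε)).and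
    (self_mem_nhdsWithin (s := Set.Ioi 0))).exists
  refine ⟨δ, hδ, fun n' t' ht' hmesh' => lt_of_le_of_lt ?_ hωδ⟩
  refine le_of_tendsto (tendsto_const_nhds.sub hI).norm ?_
  filter_upwards [tendsto_one_div_add_atTop_nhds_zero_nat.eventually (ge_mem_nhds hδ)] with m hm
  exact hclose hm ht' fun i hi => (hmesh' i hi).le

theorem HasSewingLimit.eq_add {w : ℝ} {I₁ I₂ I : E} (huw : u ≤ w) (hwv : w ≤ v)
    (h₁ : HasSewingLimit Ξ u w I₁) (h₂ : HasSewingLimit Ξ w v I₂) (h : HasSewingLimit Ξ u v I) :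
    I = I₁ + I₂ := by
  refine eq_of_forall_dist_le fun ε hε => ?_
  obtain ⟨δ₁, hδ₁, hconv₁⟩ := h₁ (ε / 3) (by positivity)
  obtain ⟨δ₂, hδ₂, hconv₂⟩ := h₂ (ε / 3) (by positivity)
  obtain ⟨δ, hδ, hconv⟩ := h (ε / 3) (by positivity)
  set η := min δ (min δ₁ δ₂)
  have hη : 0 < η := lt_min hδ (lt_min hδ₁ hδ₂)
  obtain ⟨n₁, t₁, ht₁, hmesh₁⟩ := exists_isPartition_mesh_lt huw hη
  obtain ⟨n₂, t₂, ht₂, hmesh₂⟩ := exists_isPartition_mesh_lt hwv hη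
  have hS := hconv _ _ (ht₁.append ht₂) fun i hi =>
    (appendPoints_mesh_lt ht₁ ht₂ hmesh₁ hmesh₂ i hi).trans_le (min_le_left _ _)
  have hS₁ := hconv₁ n₁ t₁ ht₁ fun i hi => (hmesh₁ i hi).trans_le
    ((min_le_right _ _).trans (min_le_left _ _))
  have hS₂ := hconv₂ n₂ t₂ ht₂ fun i hi => (hmesh₂ i hi).trans_le
    ((min_le_right _ _).trans (min_le_right _ _))
  rw [sewingSum_appendPoints (ht₁.last.trans ht₂.zero.symm)] at hS
  set S₁ := sewingSum Ξ t₁ n₁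
  set S₂ := sewingSum Ξ t₂ n₂
  rw [dist_eq_norm]
  calc ‖I - (I₁ + I₂)‖ = ‖-(S₁ + S₂ - I) + (S₁ - I₁) + (S₂ - I₂)‖ := by congr 1; abel
    _ ≤ ‖S₁ + S₂ - I‖ + ‖S₁ - I₁‖ + ‖S₂ - I₂‖ := by
        rw [← norm_neg (S₁ + S₂ - I)]; exact norm_add₃_le ..
    _ ≤ ε := by linarith

end Sewing

section HolderNorms

variable {B : Type*} [NormedAddCommGroup B] {x : ℝ → B} {a b β : ℝ}

theorem holderNorm_nonneg (x : ℝ → B) (a b β : ℝ) : 0 ≤ holderNorm x a b β :=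
  Real.iSup_nonneg fun q =>
    div_nonneg (norm_nonneg _) (Real.rpow_nonneg (sub_nonneg.2 q.2.2.1.le) _)

theorem holderNorm_le {K : ℝ} (hab : a < b)
    (h : ∀ s t, a ≤ s → s < t → t ≤ b → ‖x t - x s‖ ≤ K * (t - s) ^ β) : holderNorm x a b β ≤ K :=
  haveI : Nonempty {q : ℝ × ℝ // a ≤ q.1 ∧ q.1 < q.2 ∧ q.2 ≤ b} := ⟨⟨(a, b), le_rfl, hab, le_rfl⟩⟩
  ciSup_le fun q => (div_le_iff₀ (Real.rpow_pos_of_pos (sub_pos.2 q.2.2.1) _)).2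
    (h _ _ q.2.1 q.2.2.1 q.2.2.2)

theorem HolderOn.norm_sub_le (h : HolderOn x a b β) {s t : ℝ} (hs : s ∈ Set.Icc a b)
    (ht : t ∈ Set.Icc a b) (hst : s ≤ t) : ‖x t - x s‖ ≤ holderNorm x a b β * (t - s) ^ β := by
  rcases hst.eq_or_lt with rfl | hst
  · simpa using mul_nonneg (holderNorm_nonneg x a b β) (Real.rpow_nonneg le_rfl β)
  obtain ⟨C, hC⟩ := h
  have hbdd : BddAbove (Set.range fun q : {q : ℝ × ℝ // a ≤ q.1 ∧ q.1 < q.2 ∧ q.2 ≤ b} =>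
      ‖x q.1.2 - x q.1.1‖ / (q.1.2 - q.1.1) ^ β) := by
    refine ⟨C, ?_⟩
    rintro _ ⟨⟨q, hq₁, hq, hq₂⟩, rfl⟩
    rw [div_le_iff₀ (Real.rpow_pos_of_pos (sub_pos.2 hq) _), ← abs_of_pos (sub_pos.2 hq)]
    exact hC _ ⟨hq₁, by linarith⟩ _ ⟨by linarith, hq₂⟩
  have := le_ciSup hbdd ⟨(s, t), hs.1, hst, ht.2⟩
  rwa [div_le_iff₀ (Real.rpow_pos_of_pos (sub_pos.2 hst) _)] at this

theorem HolderOn.norm_le_supNorm (h : HolderOn x a b β) (hβ : 0 ≤ β) {t : ℝ}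
    (ht : t ∈ Set.Icc a b) : ‖x t‖ ≤ supNorm x a b := by
  obtain ⟨C, hC⟩ := h
  have hab : a ≤ b := ht.1.trans ht.2
  refine le_ciSup (f := fun s : Set.Icc a b => ‖x s‖) ⟨‖x a‖ + |C| * (b - a) ^ β, ?_⟩ ⟨t, ht⟩
  rintro _ ⟨⟨s, hs⟩, rfl⟩
  calc ‖x s‖ ≤ ‖x a‖ + ‖x s - x a‖ := norm_le_norm_add_norm_sub' _ _
    _ ≤ ‖x a‖ + |C| * (b - a) ^ β := by
        gcongr
        refine (hC a ⟨le_rfl, hab⟩ s hs).trans ?_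
        gcongr
        · exact le_abs_self C
        · rw [abs_of_nonneg (sub_nonneg.2 hs.1)]; linarith [hs.2]

end HolderNorms

section Young

variable {E : Type*} [NormedAddCommGroup E] [NormedSpace ℝ E] {f : ℝ → E} {g : ℝ → ℝ}

def youngGerm (f : ℝ → E) (g : ℝ → ℝ) (s t : ℝ) : E := (g t - g s) • f s

theorem isYoungIntegral_iff_hasSewingLimit {u v : ℝ} {I : E} :
    IsYoungIntegral f g u v I ↔ HasSewingLimit (youngGerm f g) u v I :=
  ⟨fun h ε hε => let ⟨δ, hδ, hconv⟩ := h ε hε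
    ⟨δ, hδ, fun n t ht hmesh => hconv n t ht.zero ht.last ht.lt_succ hmesh⟩,
   fun h ε hε => let ⟨δ, hδ, hconv⟩ := h ε hε
    ⟨δ, hδ, fun n t h₀ hn hlt hmesh => hconv n t ⟨h₀, hn, hlt⟩ hmesh⟩⟩

theorem hasSewingLimit_youngIntegral [CompleteSpace E] {K θ u v : ℝ} (hθ : 1 < θ) (hK : 0 ≤ K)
    (hΞ : SewingBound (youngGerm f g) K θ u v) (huv : u ≤ v) :
    HasSewingLimit (youngGerm f g) u v (youngIntegral f g u v) := by
  obtain ⟨I, hI⟩ := exists_hasSewingLimit hθ hK hΞ huv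
  have hex : ∃ I, IsYoungIntegral f g u v I := ⟨I, isYoungIntegral_iff_hasSewingLimit.2 hI⟩
  rw [youngIntegral, dif_pos hex]
  exact isYoungIntegral_iff_hasSewingLimit.1 hex.choose_spec

variable {a b lam β : ℝ}

theorem sewingBound_youngGerm (hf : HolderOn f a b lam) (hg : HolderOn g a b β) (hlam : 0 ≤ lam)
    (hβ : 0 ≤ β) :
    SewingBound (youngGerm f g) (holderNorm f a b lam * holderNorm g a b β) (lam + β) a b := by
  intro p z q hp hpz hzq hq
  have hdefect : youngGerm f g p q - youngGerm f g p z - youngGerm f g z q =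
      -((g q - g z) • (f z - f p)) := by
    simp only [youngGerm, smul_sub, sub_smul]
    abel
  have hzb : z ≤ b := hzq.trans hq
  have hpz' := hf.norm_sub_le ⟨hp, hpz.trans hzb⟩ ⟨hp.trans hpz, hzb⟩ hpz
  have hzq' := hg.norm_sub_le ⟨hp.trans hpz, hzb⟩ ⟨(hp.trans hpz).trans hzq, hq⟩ hzq
  have hKf := holderNorm_nonneg f a b lam
  have hKg := holderNorm_nonneg g a b β
  rw [hdefect, norm_neg, norm_smul, Real.rpow_add_of_nonneg (by linarith) hlam hβ]
  calc ‖g q - g z‖ * ‖f z - f p‖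
      ≤ (holderNorm g a b β * (q - z) ^ β) * (holderNorm f a b lam * (z - p) ^ lam) := by
        gcongr
    _ ≤ (holderNorm g a b β * (q - p) ^ β) * (holderNorm f a b lam * (q - p) ^ lam) := by
        gcongr
        exact mul_nonneg hKg (Real.rpow_nonneg (by linarith) β)
    _ = _ := by ring

theorem HasSewingLimit.norm_le_of_youngGerm (hf : HolderOn f a b lam) (hg : HolderOn g a b β)
    (hlam : 0 ≤ lam) (hβ : 0 ≤ β) (hsum : 1 < lam + β) {s t : ℝ} {I : E} (has : a ≤ s)
    (hst : s ≤ t) (htb : t ≤ b) (hI : HasSewingLimit (youngGerm f g) s t I) :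
    ‖I‖ ≤ (sewingConst (lam + β) + 1) * holderNorm g a b β * (t - s) ^ β *
      (supNorm f a b + holderNorm f a b lam * (t - s) ^ lam) := by
  have hΞ := (sewingBound_youngGerm hf hg hlam hβ).mono has htb
  have hKf := holderNorm_nonneg f a b lam
  have hKg := holderNorm_nonneg g a b β
  have hC := sewingConst_nonneg (lam + β)
  have hlocal := hI.norm_sub_le hsum (mul_nonneg hKf hKg) hΞ hst
  have hg_st := hg.norm_sub_le ⟨has, hst.trans htb⟩ ⟨has.trans hst, htb⟩ hst
  have hf_s := hf.norm_le_supNorm hlam ⟨has, hst.trans htb⟩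
  have hM := (norm_nonneg _).trans hf_s
  have hpowβ := Real.rpow_nonneg (sub_nonneg.2 hst) β
  have hpowlam := Real.rpow_nonneg (sub_nonneg.2 hst) lam
  rw [Real.rpow_add_of_nonneg (sub_nonneg.2 hst) hlam hβ] at hlocal
  calc ‖I‖ ≤ ‖youngGerm f g s t‖ + ‖I - youngGerm f g s t‖ := norm_le_insert' _ _
    _ ≤ holderNorm g a b β * (t - s) ^ β * supNorm f a b + sewingConst (lam + β) *
          (holderNorm f a b lam * holderNorm g a b β) * ((t - s) ^ lam * (t - s) ^ β) := by
        refine add_le_add ?_ hlocal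
        rw [youngGerm, norm_smul]
        gcongr
    _ ≤ _ := by
        nlinarith [mul_nonneg (mul_nonneg hKg hpowβ) hM,
          mul_nonneg (mul_nonneg (mul_nonneg hKg hpowβ) hKf) hpowlam,
          mul_nonneg hC (mul_nonneg (mul_nonneg hKg hpowβ) hM)]

theorem norm_youngIntegral_sub_le [CompleteSpace E] (hf : HolderOn f a b lam)
    (hg : HolderOn g a b β) (hlam : 0 ≤ lam) (hβ : 0 ≤ β) (hsum : 1 < lam + β) {s t : ℝ}
    (has : a ≤ s) (hst : s ≤ t) (htb : t ≤ b) :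
    ‖youngIntegral f g a t - youngIntegral f g a s‖ ≤
      (sewingConst (lam + β) + 1) * holderNorm g a b β * (t - s) ^ β *
        (supNorm f a b + holderNorm f a b lam * (t - s) ^ lam) := by
  have hΞ := sewingBound_youngGerm hf hg hlam hβ
  have hK := mul_nonneg (holderNorm_nonneg f a b lam) (holderNorm_nonneg g a b β)
  have hJ {x : ℝ} (hax : a ≤ x) (hxb : x ≤ b) :=
    hasSewingLimit_youngIntegral hsum hK (hΞ.mono le_rfl hxb) hax
  obtain ⟨I, hI⟩ := exists_hasSewingLimit hsum hK (hΞ.mono has htb) hst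
  rw [HasSewingLimit.eq_add has hst (hJ has (hst.trans htb)) hI (hJ (has.trans hst) htb),
    add_sub_cancel_left]
  exact hI.norm_le_of_youngGerm hf hg hlam hβ hsum has hst htb

end Young

theorem young_integral_holder_bound_general
    (β lam : ℝ) (hβ0 : 0 < β) (hlam0 : 0 < lam)
    (hsum : 1 < lam + β) :
    ∃ C : ℝ, ∀ a b : ℝ, 0 ≤ a → a < b →
      ∀ f g : ℝ → ℝ, HolderOn f a b lam → HolderOn g a b β →
        (∃ I : ℝ, IsYoungIntegral f g a b I ∧
          |I| ≤ C * holderNorm g a b β *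
            (supNorm f a b * (b - a) ^ β + holderNorm f a b lam * (b - a) ^ (lam + β))) ∧
        holderNorm (fun t => youngIntegral f g a t) a b β ≤
          C * holderNorm g a b β * (supNorm f a b + holderNorm f a b lam * (b - a) ^ lam) := by
  refine ⟨sewingConst (lam + β) + 1, fun a b _ hab f g hf hg => ⟨?_, ?_⟩⟩
  · have hK := mul_nonneg (holderNorm_nonneg f a b lam) (holderNorm_nonneg g a b β)
    obtain ⟨I, hI⟩ :=
      exists_hasSewingLimit hsum hK (sewingBound_youngGerm hf hg hlam0.le hβ0.le) hab.le
    refine ⟨I, isYoungIntegral_iff_hasSewingLimit.2 hI, ?_⟩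
    rw [← Real.norm_eq_abs, Real.rpow_add (sub_pos.2 hab)]
    convert hI.norm_le_of_youngGerm hf hg hlam0.le hβ0.le hsum le_rfl hab.le le_rfl using 1
    ring
  · refine holderNorm_le hab fun s t has hst htb => ?_
    have := sewingConst_nonneg (lam + β)
    have := holderNorm_nonneg f a b lam
    have := holderNorm_nonneg g a b β
    have := (norm_nonneg _).trans (hf.norm_le_supNorm hlam0.le ⟨le_rfl, hab.le⟩)
    calc _ ≤ (sewingConst (lam + β) + 1) * holderNorm g a b β * (t - s) ^ β *
          (supNorm f a b + holderNorm f a b lam * (t - s) ^ lam) :=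
          norm_youngIntegral_sub_le hf hg hlam0.le hβ0.le hsum has hst.le htb
      _ ≤ (sewingConst (lam + β) + 1) * holderNorm g a b β * (t - s) ^ β *
          (supNorm f a b + holderNorm f a b lam * (b - a) ^ lam) := by gcongr
      _ = _ := by ring

theorem young_integral_holder_bound
    (β lam : ℝ) (hβ0 : 0 < β) (hβ1 : β ≤ 1) (hlam0 : 0 < lam) (hlam1 : lam ≤ 1)
    (hsum : 1 < lam + β) :
    ∃ C : ℝ, ∀ a b : ℝ, 0 ≤ a → a < b →
      ∀ f g : ℝ → ℝ, HolderOn f a b lam → HolderOn g a b β →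
        (∃ I : ℝ, IsYoungIntegral f g a b I ∧
          |I| ≤ C * holderNorm g a b β *
            (supNorm f a b * (b - a) ^ β + holderNorm f a b lam * (b - a) ^ (lam + β))) ∧
        holderNorm (fun t => youngIntegral f g a t) a b β ≤
          C * holderNorm g a b β * (supNorm f a b + holderNorm f a b lam * (b - a) ^ lam) :=
  young_integral_holder_bound_general β lam hβ0 hlam0 hsum
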